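/- arXiv:2003.11950 — 5 statements merged into one kernel-verified Lean document; each statement's English description precedes it below -/
import Mathlib

section
/- The correspondence induced by F between strict subobjects of X and subobjects of F(X) is an isomorphism of posets: for strict subobjects X', X'' of X, one has X' ⊆ X'' if and only if F(X') ⊆ F(X''). -/
open CategoryTheory Limits

universe v u v' u'

variable (C : Type u) [Category.{v} C] [Preadditive C] [HasZeroObject C]
  [HasBinaryBiproducts C]
variable (D : Type u') [Category.{v'} D] [Abelian D]
variable (F : C ⥤ D) [F.Additive] [F.Faithful]
variable (V : Type*) [AddCommGroup V] [LinearOrder V] [IsOrderedAddMonoid V]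

/-- The data and axioms of abstract Harder–Narasimhan theory:
an exact structure on `C` (given by its class of short strict exact sequences),
an exact faithful functor `F : C ⥤ D` inducing bijections between strict
subobjects and subobjects of the image, a rank function on `D` and a degree
function on `C`. -/
structure HNTheory where
  /-- `SSE f g` means `0 ⟶ A ⟶ B ⟶ Z ⟶ 0` is a short strict exact sequence. -/
  SSE : ∀ ⦃A B Z : C⦄, (A ⟶ B) → (B ⟶ Z) → Prop
  sse_comp_zero : ∀ ⦃A B Z : C⦄ (f : A ⟶ B) (g : B ⟶ Z), SSE f g → f ≫ g = 0
  sse_mono : ∀ ⦃A B Z : C⦄ (f : A ⟶ B) (g : B ⟶ Z), SSE f g → Mono f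
  sse_epi : ∀ ⦃A B Z : C⦄ (f : A ⟶ B) (g : B ⟶ Z), SSE f g → Epi g
  sse_isKernel : ∀ ⦃A B Z : C⦄ (f : A ⟶ B) (g : B ⟶ Z) (hfg : SSE f g),
    Nonempty (IsLimit (KernelFork.ofι f (sse_comp_zero f g hfg)))
  sse_isCokernel : ∀ ⦃A B Z : C⦄ (f : A ⟶ B) (g : B ⟶ Z) (hfg : SSE f g),
    Nonempty (IsColimit (CokernelCofork.ofπ g (sse_comp_zero f g hfg)))
  /-- `F` is exact. -/
  F_exact : ∀ ⦃A B Z : C⦄ (f : A ⟶ B) (g : B ⟶ Z) (hfg : SSE f g),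
    (ShortComplex.mk (F.map f) (F.map g)
      (by rw [← F.map_comp, sse_comp_zero f g hfg, F.map_zero])).ShortExact
  /-- `F` induces a bijection between strict subobjects of `X` and subobjects
  of `F(X)`. -/
  strict_sub_bij : ∀ X : C,
    Function.Bijective
      (fun S : {S : Subobject X // ∃ (Z : C) (g : X ⟶ Z), SSE S.arrow g} =>
        imageSubobject (F.map S.1.arrow))
  rk : D → ℕ
  rk_iso : ∀ ⦃X Y : D⦄, (X ≅ Y) → rk X = rk Y
  rk_eq_zero_iff : ∀ X : D, rk X = 0 ↔ IsZero X
  rk_additive : ∀ (S : ShortComplex D), S.ShortExact → rk S.X₂ = rk S.X₁ + rk S.X₃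
  deg : C → V
  deg_iso : ∀ ⦃X Y : C⦄, (X ≅ Y) → deg X = deg Y
  deg_additive : ∀ ⦃A B Z : C⦄ (f : A ⟶ B) (g : B ⟶ Z), SSE f g → deg B = deg A + deg Z
  deg_le_of_FIso : ∀ ⦃X Y : C⦄ (f : X ⟶ Y), IsIso (F.map f) → deg X ≤ deg Y
  deg_eq_iff_of_FIso : ∀ ⦃X Y : C⦄ (f : X ⟶ Y), IsIso (F.map f) → (deg X = deg Y ↔ IsIso f)

namespace HNTheory

variable {C D F V}

/-- The subobject `F(X') ⊆ F(X)` associated to a subobject `X' ⊆ X`. -/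
noncomputable def FSub (_h : HNTheory C D F V) {X : C} (S : Subobject X) :
    Subobject (F.obj X) :=
  imageSubobject (F.map S.arrow)

variable (h : HNTheory C D F V)

/-- The rank of an object of `C` is the rank of its image in `D`. -/
def rkC (X : C) : ℕ := h.rk (F.obj X)

/-- A subobject is strict if it is an admissible (strict) monomorphism,
i.e. fits in a short strict exact sequence. -/
def StrictSub {X : C} (S : Subobject X) : Prop :=
  ∃ (Z : C) (g : X ⟶ Z), h.SSE S.arrow g

/-- `μ(X) ≤ μ(Y)`, in cross-multiplied form `rk(Y) • deg(X) ≤ rk(X) • deg(Y)`. -/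
def muLE (X Y : C) : Prop := h.rkC Y • h.deg X ≤ h.rkC X • h.deg Y

/-- `μ(X) < μ(Y)`, in cross-multiplied form. -/
def muLT (X Y : C) : Prop := h.rkC Y • h.deg X < h.rkC X • h.deg Y

/-- `μ(X) = μ(Y)`, in cross-multiplied form. -/
def muEQ (X Y : C) : Prop := h.rkC Y • h.deg X = h.rkC X • h.deg Y

/-- A nonzero object is semistable if every nonzero proper subobject has
slope at most that of the ambient object. -/
def Semistable (X : C) : Prop :=
  ¬ IsZero X ∧ ∀ S : Subobject X, ¬ IsZero ((S : C)) → S ≠ ⊤ → h.muLE (S : C) X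

/-- A subobject of maximal slope. -/
def MaxSlopeSub {X : C} (S : Subobject X) : Prop :=
  ¬ IsZero ((S : C)) ∧ ∀ T : Subobject X, ¬ IsZero ((T : C)) → h.muLE (T : C) (S : C)

/-- `G` is (a model of) the `i`-th graded piece `c i.succ / c i.castSucc` of a
filtration `c` by strict subobjects. -/
def GrAt {X : C} {N : ℕ} (c : Fin (N + 1) → Subobject X) (i : Fin N) (G : C) : Prop :=
  ∃ (hle : c i.castSucc ≤ c i.succ) (p : ((c i.succ : Subobject X) : C) ⟶ G),
    h.SSE (Subobject.ofLE (c i.castSucc) (c i.succ) hle) p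

/-- `c` is a Harder–Narasimhan filtration. -/
def IsHNFilt {X : C} {N : ℕ} (c : Fin (N + 1) → Subobject X) : Prop :=
  StrictMono c ∧ c 0 = ⊥ ∧ c (Fin.last N) = ⊤ ∧ (∀ i, h.StrictSub (c i)) ∧
  (∀ (i : Fin N) (G : C), h.GrAt c i G → h.Semistable G) ∧
  (∀ (i j : Fin N), i < j → ∀ (Gi Gj : C),
    h.GrAt c i Gi → h.GrAt c j Gj → h.muLT Gj Gi)

end HNTheory

/-!
Any functor is monotone on subobjects. Conversely, a strict subobject `T` is the kernel of some
`g`; if `F(S) ≤ F(T)` then `F(S.arrow ≫ g)` factors through `F(T.arrow ≫ g) = 0`, so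
`S.arrow ≫ g = 0` by faithfulness and `S` factors through `T`.
-/

section

variable {𝒞 : Type*} [Category 𝒞] {𝒟 : Type*} [Category 𝒟]

theorem imageSubobject_map_arrow_mono [HasImages 𝒟] (F : 𝒞 ⥤ 𝒟) {X : 𝒞}
    {S T : Subobject X} (hle : S ≤ T) :
    imageSubobject (F.map S.arrow) ≤ imageSubobject (F.map T.arrow) := by
  rw [← Subobject.ofLE_arrow hle, F.map_comp]
  exact imageSubobject_comp_le _ _

theorem comp_eq_zero_of_imageSubobject_le [HasImages 𝒟] [HasEqualizers 𝒟]
    [HasZeroMorphisms 𝒟] {A A' Y Z : 𝒟} {f : A ⟶ Y} {f' : A' ⟶ Y} {g : Y ⟶ Z}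
    (hle : imageSubobject f ≤ imageSubobject f') (hg : f' ≫ g = 0) : f ≫ g = 0 := by
  rw [← imageSubobject_arrow_comp f, Category.assoc, ← Subobject.ofLE_arrow hle,
    Category.assoc, imageSubobject_arrow_comp_eq_zero hg, comp_zero, comp_zero]

theorem Subobject.le_of_isKernel [HasZeroMorphisms 𝒞] {X Z : 𝒞} {S T : Subobject X}
    {g : X ⟶ Z} {w : T.arrow ≫ g = 0} (hT : IsLimit (KernelFork.ofι T.arrow w))
    (hS : S.arrow ≫ g = 0) : S ≤ T :=
  let ⟨k, hk⟩ := KernelFork.IsLimit.lift' hT S.arrow hS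
  Subobject.le_of_comm k hk

end

theorem stmt1 (h : HNTheory C D F V) {X : C} (S T : Subobject X)
    (hT : h.StrictSub T) :
    S ≤ T ↔ h.FSub S ≤ h.FSub T := by
  refine ⟨imageSubobject_map_arrow_mono F, fun hle => ?_⟩
  obtain ⟨Z, g, hsse⟩ := hT
  obtain ⟨hker⟩ := h.sse_isKernel _ _ hsse
  have hFg : F.map T.arrow ≫ F.map g = 0 := by
    rw [← F.map_comp, h.sse_comp_zero _ _ hsse, F.map_zero]
  refine Subobject.le_of_isKernel hker (F.map_injective ?_)
  rw [F.map_comp, F.map_zero]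
  exact comp_eq_zero_of_imageSubobject_le hle hFg
end

section
/- For any subobject X' of an object X of C, the saturation X̃' (the unique strict subobject of X with F(X̃') = F(X')) contains X'. Moreover X̃' is the initial strict subobject of X containing X', and F takes the inclusion X' ⊆ X̃' to an isomorphism. -/
open CategoryTheory Limits

universe v u v' u'

variable (C : Type u) [Category.{v} C] [Preadditive C] [HasZeroObject C]
  [HasBinaryBiproducts C]
variable (D : Type u') [Category.{v'} D] [Abelian D]
variable (F : C ⥤ D) [F.Additive] [F.Faithful]
variable (V : Type*) [AddCommGroup V] [LinearOrder V] [IsOrderedAddMonoid V]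

/-!
The strict subobject `T` is the kernel of some `g : X ⟶ Z`. Since `F` is faithful, a subobject `U`
lies in `T` as soon as `F(U) ⊆ F(T)`: then `F(U.arrow ≫ g) = 0`, so `U.arrow ≫ g = 0` and `U` factors
through the kernel. Applied to `S` (with `F(S) = F(T)`) this gives `S ≤ T`, and applied to `T` and a
strict `U ⊇ S` it gives minimality. Finally `F` preserves monomorphisms (the kernel of `F(f)` is `F`
of a strict subobject `W`, and `W.arrow ≫ f = 0` forces `W = 0`), so `F(S ⊆ T)` is a monomorphism
between two representatives of the same subobject of `F(X)`, hence an isomorphism.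
-/

lemma comp_eq_zero_of_imageSubobject_le_kernelSubobject {E : Type*} [Category E]
    [HasZeroMorphisms E] {A B Z : E} {f : A ⟶ B} {g : B ⟶ Z} [HasImage f] [HasKernel g]
    (hle : imageSubobject f ≤ kernelSubobject g) : f ≫ g = 0 := by
  rw [← imageSubobject_arrow_comp f, ← Subobject.ofLE_arrow hle, Category.assoc,
    Category.assoc, kernelSubobject_arrow_comp, comp_zero, comp_zero]

lemma isIso_of_comp_eq_of_mk_eq_mk {E : Type*} [Category E] {A₁ A₂ B : E} {u : A₁ ⟶ A₂}
    {f : A₁ ⟶ B} {g : A₂ ⟶ B} [Mono f] [Mono g] (hu : u ≫ g = f)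
    (hfg : Subobject.mk f = Subobject.mk g) : IsIso u := by
  have : u = (Subobject.isoOfMkEqMk f g hfg).hom := by
    rw [← cancel_mono g, hu, Subobject.isoOfMkEqMk_hom, Subobject.ofMkLEMk_comp]
  rw [this]
  infer_instance

namespace HNTheory

variable {C D F V}

lemma FSub_monotone (h : HNTheory C D F V) {X : C} : Monotone (h.FSub (X := X)) := by
  intro S U hSU
  change imageSubobject (F.map S.arrow) ≤ imageSubobject (F.map U.arrow)
  rw [← Subobject.ofLE_arrow hSU, F.map_comp]
  exact imageSubobject_comp_le _ _

lemma le_of_FSub_le (h : HNTheory C D F V) {X : C} {S T : Subobject X} (hT : h.StrictSub T)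
    (hST : h.FSub S ≤ h.FSub T) : S ≤ T := by
  obtain ⟨Z, g, hsse⟩ := hT
  obtain ⟨hker⟩ := h.sse_isKernel _ _ hsse
  have hFTg : F.map T.arrow ≫ F.map g = 0 := by
    rw [← F.map_comp, h.sse_comp_zero _ _ hsse, F.map_zero]
  have hFSg : F.map S.arrow ≫ F.map g = 0 :=
    comp_eq_zero_of_imageSubobject_le_kernelSubobject (hST.trans (image_le_kernel _ _ hFTg))
  have hSg : S.arrow ≫ g = 0 := F.map_injective (by rw [F.map_comp, F.map_zero, hFSg])
  obtain ⟨l, hl⟩ := KernelFork.IsLimit.lift' hker S.arrow hSg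
  exact Subobject.le_of_comm l hl

lemma map_mono (h : HNTheory C D F V) {A B : C} (f : A ⟶ B) [Mono f] : Mono (F.map f) := by
  obtain ⟨⟨W, _⟩, hW⟩ := (h.strict_sub_bij A).2 (kernelSubobject (F.map f))
  change imageSubobject (F.map W.arrow) = kernelSubobject (F.map f) at hW
  have hWf : W.arrow ≫ f = 0 := F.map_injective (by
    rw [F.map_comp, F.map_zero]
    exact comp_eq_zero_of_imageSubobject_le_kernelSubobject hW.le)
  have hW0 : W.arrow = 0 := by rw [← cancel_mono f, hWf, zero_comp]
  have hker : kernelSubobject (F.map f) = ⊥ := by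
    rw [← hW, hW0, F.map_zero, imageSubobject_zero]
  exact Abelian.mono_of_kernel_ι_eq_zero _ (Subobject.mk_eq_bot_iff_zero.mp hker)

end HNTheory

/-- (2.5) The saturation `T` of a subobject `S` (the strict subobject with
`F(T) = F(S)`) contains `S`, is the initial strict subobject containing `S`,
and `F` takes the inclusion `S ⊆ T` to an isomorphism. -/
theorem stmt2 (h : HNTheory C D F V) {X : C} (S T : Subobject X)
    (hT : h.StrictSub T) (hFT : h.FSub T = h.FSub S) :
    ∃ hle : S ≤ T,
      (∀ U : Subobject X, h.StrictSub U → S ≤ U → T ≤ U) ∧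
      IsIso (F.map (Subobject.ofLE S T hle)) := by
  have hle : S ≤ T := h.le_of_FSub_le hT hFT.ge
  refine ⟨hle, fun U hU hSU ↦ h.le_of_FSub_le hU (hFT.trans_le (h.FSub_monotone hSU)), ?_⟩
  have := h.map_mono S.arrow
  have := h.map_mono T.arrow
  refine isIso_of_comp_eq_of_mk_eq_mk (by rw [← F.map_comp, Subobject.ofLE_arrow]) ?_
  rw [← imageSubobject_mono, ← imageSubobject_mono]
  exact hFT.symm
end

section
/- Every morphism f : X → Y in C has a kernel and an image in C; the kernel is a strict subobject of X, and X/ker f is canonically identified with the image of f. -/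
open CategoryTheory Limits

universe v u v' u'

variable (C : Type u) [Category.{v} C] [Preadditive C] [HasZeroObject C]
  [HasBinaryBiproducts C]
variable (D : Type u') [Category.{v'} D] [Abelian D]
variable (F : C ⥤ D) [F.Additive] [F.Faithful]
variable (V : Type*) [AddCommGroup V] [LinearOrder V] [IsOrderedAddMonoid V]

/-!
Take the strict subobject `K ↪ X` with `F(K) = ker F(f)`, and its strict quotient `q : X ↠ Q`.
Faithfulness of `F` turns "`l ≫ F(f) = 0` implies `l ≫ F(q) = 0`" into the same statement in `C`,
so `K` is a kernel of `f` and `f` descends to `m : Q → Y`. By exactness of `F`, `F(q)` is epi with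
the same kernel as `F(q) ≫ F(m) = F(f)`, so `F(m)`, hence `m`, is mono; minimality of `m` is the
universal property of the cokernel `q`.
-/

section ImageKernel

variable {E : Type*} [Category E] [HasZeroMorphisms E] {K X Y : E} {k : K ⟶ X} {f : X ⟶ Y}
  [HasImage k] [HasKernel f]

lemma comp_eq_zero_of_imageSubobject_eq_kernelSubobject
    (hkf : imageSubobject k = kernelSubobject f) : k ≫ f = 0 := by
  rw [← kernelSubobject_factors_iff, ← hkf]
  simpa using imageSubobject_factors_comp_self k (𝟙 K)

lemma comp_eq_zero_of_imageSubobject_eq_kernelSubobject_of_comp_eq_zero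
    [Epi (factorThruImageSubobject k)] {Z : E} {g : X ⟶ Z}
    (hkf : imageSubobject k = kernelSubobject f) (hkg : k ≫ g = 0) {W : E} (l : W ⟶ X)
    (hl : l ≫ f = 0) : l ≫ g = 0 := by
  have hfac : (imageSubobject k).Factors l := hkf ▸ kernelSubobject_factors f l hl
  rw [← Subobject.factorThru_arrow _ _ hfac, Category.assoc, imageSubobject_arrow_comp_eq_zero hkg,
    comp_zero]

end ImageKernel

lemma mono_of_epi_of_comp_eq_zero {E : Type*} [Category E] [Abelian E] {X Z Y : E}
    (g : X ⟶ Z) [Epi g] (m : Z ⟶ Y) (H : ∀ {W : E} (l : W ⟶ X), l ≫ g ≫ m = 0 → l ≫ g = 0) :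
    Mono m := by
  refine Preadditive.mono_of_cancel_zero _ fun t ht => ?_
  obtain ⟨W, π, _, l, hπ⟩ := surjective_up_to_refinements_of_epi g t
  have hl : l ≫ g = 0 := H l (by rw [← Category.assoc, ← hπ, Category.assoc, ht, comp_zero])
  rw [← cancel_epi π, hπ, hl, comp_zero]

section CokernelCofork

variable {E : Type*} [Category E] [HasZeroMorphisms E] {K X Q : E} {k : K ⟶ X} {q : X ⟶ Q}
  {hkq : k ≫ q = 0}

def KernelFork.IsLimit.ofIsLimitOfComp (hk : IsLimit (KernelFork.ofι k hkq)) {Y : E} {f : X ⟶ Y}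
    (hkf : k ≫ f = 0) (H : ∀ {W : E} (l : W ⟶ X), l ≫ f = 0 → l ≫ q = 0) :
    IsLimit (KernelFork.ofι k hkf) :=
  have : Mono k := Fork.IsLimit.mono hk
  KernelFork.IsLimit.ofι' k hkf fun l hl => KernelFork.IsLimit.lift' hk l (H l hl)

lemma CokernelCofork.IsColimit.exists_lift_of_mono (hq : IsColimit (CokernelCofork.ofπ q hkq))
    {Y Y' : E} {m : Q ⟶ Y} (ι : Y' ⟶ Y) [Mono ι] {e : X ⟶ Y'} (he : e ≫ ι = q ≫ m) :
    ∃ u : Q ⟶ Y', u ≫ ι = m := by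
  have hke : k ≫ e = 0 := by
    rw [← cancel_mono ι, Category.assoc, he, reassoc_of% hkq, zero_comp, zero_comp]
  obtain ⟨u, hu⟩ := CokernelCofork.IsColimit.desc' hq e hke
  refine ⟨u, Cofork.IsColimit.hom_ext hq ?_⟩
  simp only [Cofork.π_ofπ] at hu ⊢
  rw [reassoc_of% hu, he]

end CokernelCofork

/-- (2.7) Every morphism `f : X ⟶ Y` in `C` has a kernel `k : K ⟶ X` and an
image; the kernel is a strict subobject of `X` (with quotient `q : X ⟶ Q`),
and `X/ker f = Q` is canonically identified with the image of `f`, namely `Q`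
embeds in `Y` via a monomorphism `m` with `q ≫ m = f` which is minimal among
subobjects of `Y` through which `f` factors. -/
theorem stmt3 (h : HNTheory C D F V) {X Y : C} (f : X ⟶ Y) :
    ∃ (K : C) (k : K ⟶ X) (hk : k ≫ f = 0),
      Nonempty (IsLimit (KernelFork.ofι k hk)) ∧
      ∃ (Q : C) (q : X ⟶ Q), h.SSE k q ∧
        ∃ (m : Q ⟶ Y), Mono m ∧ q ≫ m = f ∧
          ∀ (Y' : C) (ι : Y' ⟶ Y), Mono ι → (∃ e : X ⟶ Y', e ≫ ι = f) →
            ∃ u : Q ⟶ Y', u ≫ ι = m := by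
  obtain ⟨⟨K, Q, q, hSSE⟩, hK : imageSubobject (F.map K.arrow) = _⟩ :=
    (h.strict_sub_bij X).2 (kernelSubobject (F.map f))
  set k := K.arrow
  have hkq := h.sse_comp_zero k q hSSE
  have hkf : k ≫ f = 0 :=
    F.map_injective (by simpa using comp_eq_zero_of_imageSubobject_eq_kernelSubobject hK)
  have hFkill : ∀ {W : D} (l : W ⟶ F.obj X), l ≫ F.map f = 0 → l ≫ F.map q = 0 := fun l hl =>
    comp_eq_zero_of_imageSubobject_eq_kernelSubobject_of_comp_eq_zero hK
      (by rw [← F.map_comp, hkq, F.map_zero]) l hl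
  have hkill : ∀ {W : C} (l : W ⟶ X), l ≫ f = 0 → l ≫ q = 0 := fun l hl =>
    F.map_injective (by simpa using hFkill (F.map l) (by rw [← F.map_comp, hl, F.map_zero]))
  obtain ⟨hk⟩ := h.sse_isKernel k q hSSE
  obtain ⟨hq⟩ := h.sse_isCokernel k q hSSE
  obtain ⟨m, hm : q ≫ m = f⟩ := CokernelCofork.IsColimit.desc' hq f hkf
  have : Epi (F.map q) := (h.F_exact k q hSSE).epi_g
  have hFm : Mono (F.map m) := mono_of_epi_of_comp_eq_zero (F.map q) (F.map m) fun l hl =>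
    hFkill l (by rwa [← F.map_comp, hm] at hl)
  refine ⟨_, k, hkf, ⟨KernelFork.IsLimit.ofIsLimitOfComp hk hkf hkill⟩, Q, q, hSSE, m,
    F.mono_of_mono_map hFm, hm, fun Y' ι _ ⟨e, he⟩ => ?_⟩
  exact CokernelCofork.IsColimit.exists_lift_of_mono hq ι (he.trans hm.symm)
end

section
/- Let X be an object of C with subobjects X', X'' such that the inclusions X' ∩ X'' ⊆ X' and X'' ⊆ X'+X'' are strict. Then the canonical map X'/(X' ∩ X'') → (X'+X'')/X'' induced by X' ⊆ X'+X'' is an isomorphism. -/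
open CategoryTheory Limits

universe v u v' u'

variable (C : Type u) [Category.{v} C] [Preadditive C] [HasZeroObject C]
  [HasBinaryBiproducts C]
variable (D : Type u') [Category.{v'} D] [Abelian D]
variable (F : C ⥤ D) [F.Additive] [F.Faithful]
variable (V : Type*) [AddCommGroup V] [LinearOrder V] [IsOrderedAddMonoid V]

/-! The map `θ : X' ⊞ X'' ⟶ X' + X''` factors as the cokernel of the strict subobject `N` of
`X' ⊞ X''` with `F N = ker F(θ)`, followed by a monomorphism `ρ`; as `X'` and `X''` both factor
through `ρ`, minimality of `X' + X''` makes `ρ` an isomorphism, so `θ` is a cokernel of `N`.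
The projection to `X'/(X' ∩ X'')` kills `N`: by the bijection on strict subobjects this can be
tested on subobjects of `X'` killed by `X' ⟶ (X' + X'')/X''`, and those lie in `X''`, hence in
`X' ∩ X''`. The induced map `X' + X'' ⟶ X'/(X' ∩ X'')` vanishes on `X''`, so it descends to an
inverse of the canonical map. -/

namespace CategoryTheory

lemma Subobject.isIso_of_isLUB {C : Type*} [Category C] {X : C} {S T U : Subobject X}
    (hU : IsLUB {S, T} U) {Z : C} (ρ : Z ⟶ (U : C)) [Mono ρ] (a : (S : C) ⟶ Z)
    (b : (T : C) ⟶ Z) (ha : a ≫ ρ ≫ U.arrow = S.arrow) (hb : b ≫ ρ ≫ U.arrow = T.arrow) :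
    IsIso ρ := by
  have hUle : U ≤ Subobject.mk (ρ ≫ U.arrow) := hU.2 <| by
    rintro _ (rfl | rfl)
    exacts [Subobject.le_mk_of_comm a ha, Subobject.le_mk_of_comm b hb]
  have : IsSplitEpi ρ := .mk' ⟨Subobject.ofLEMk U _ hUle, by
    rw [← cancel_mono U.arrow, Category.assoc, Subobject.ofLEMk_comp, Category.id_comp]⟩
  exact isIso_of_mono_of_isSplitEpi ρ

lemma Subobject.comp_eq_zero_of_isGLB {C : Type*} [Category C] [HasZeroMorphisms C] {X : C}
    {S T U I : Subobject X} (hI : IsGLB {S, T} I) (hIS : I ≤ S) (hTU : T ≤ U) (hSU : S ≤ U)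
    {Q₁ : C} {q₁ : (S : C) ⟶ Q₁} (hq₁ : Subobject.ofLE I S hIS ≫ q₁ = 0)
    {Q₂ : C} {q₂ : (U : C) ⟶ Q₂} {w : Subobject.ofLE T U hTU ≫ q₂ = 0}
    (hq₂ : IsLimit (KernelFork.ofι _ w)) {J : C} (m : J ⟶ S) [Mono m]
    (hm : m ≫ Subobject.ofLE S U hSU ≫ q₂ = 0) : m ≫ q₁ = 0 := by
  obtain ⟨v, hv⟩ := KernelFork.IsLimit.lift' hq₂ (m ≫ Subobject.ofLE S U hSU)
    (by rw [Category.assoc, hm])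
  dsimp only [Fork.ι_ofι] at hv
  have hle : Subobject.mk (m ≫ S.arrow) ≤ I := hI.2 <| by
    rintro _ (rfl | rfl)
    · exact Subobject.mk_le_of_comm m rfl
    · refine Subobject.mk_le_of_comm v ?_
      rw [← Subobject.ofLE_arrow hTU, ← Category.assoc, hv, Category.assoc,
        Subobject.ofLE_arrow]
  have hm' : Subobject.ofMkLE _ I hle ≫ Subobject.ofLE I S hIS = m := by
    rw [← cancel_mono S.arrow, Category.assoc, Subobject.ofLE_arrow, Subobject.ofMkLE_arrow]
  rw [← hm', Category.assoc, hq₁, comp_zero]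

lemma Limits.imageSubobject_arrow_comp_eq_zero_iff {D : Type*} [Category D] [Abelian D]
    {A B E : D} (f : A ⟶ B) (g : B ⟶ E) : (imageSubobject f).arrow ≫ g = 0 ↔ f ≫ g = 0 :=
  ⟨fun hg => by rw [← imageSubobject_arrow_comp f, Category.assoc, hg, comp_zero],
    imageSubobject_arrow_comp_eq_zero⟩

lemma Abelian.mono_of_kernel_ι_comp_eq_zero {D : Type*} [Category D] [Abelian D] {A B E : D}
    (g : A ⟶ B) [Epi g] (ρ : B ⟶ E) (hg : kernel.ι (g ≫ ρ) ≫ g = 0) : Mono ρ := by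
  refine Preadditive.mono_of_cancel_zero _ fun {P} t ht => ?_
  have hker : pullback.snd t g ≫ g ≫ ρ = 0 := by
    rw [← Category.assoc, ← pullback.condition, Category.assoc, ht, comp_zero]
  have : pullback.snd t g ≫ g = 0 := by
    rw [← kernel.lift_ι _ _ hker, Category.assoc, hg, comp_zero]
  exact zero_of_epi_comp (pullback.fst t g) (by rw [pullback.condition, this])

lemma exists_unique_isIso_of_biprod_desc_comp_eq {C : Type*} [Category C] [Preadditive C]
    [HasBinaryBiproducts C] {I S T U Q₁ Q₂ : C} {i₁ : I ⟶ S} {j : S ⟶ U} {i₂ : T ⟶ U}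
    {q₁ : S ⟶ Q₁} {q₂ : U ⟶ Q₂} {w₁ : i₁ ≫ q₁ = 0} (hq₁ : IsColimit (CokernelCofork.ofπ q₁ w₁))
    {w₂ : i₂ ≫ q₂ = 0} (hq₂ : IsColimit (CokernelCofork.ofπ q₂ w₂)) (hj : i₁ ≫ j ≫ q₂ = 0)
    [Epi (biprod.desc j i₂)] (u : U ⟶ Q₁) (hu : biprod.desc j i₂ ≫ u = biprod.fst ≫ q₁) :
    ∃! φ : Q₁ ⟶ Q₂, q₁ ≫ φ = j ≫ q₂ ∧ IsIso φ := by
  have : Epi q₁ := Cofork.IsColimit.epi hq₁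
  have : Epi q₂ := Cofork.IsColimit.epi hq₂
  have hju : j ≫ u = q₁ := by simpa using biprod.inl ≫= hu
  have hi₂u : i₂ ≫ u = 0 := by simpa using biprod.inr ≫= hu
  obtain ⟨φ, hφ⟩ := CokernelCofork.IsColimit.desc' hq₁ (j ≫ q₂) hj
  obtain ⟨σ, hσ⟩ := CokernelCofork.IsColimit.desc' hq₂ u hi₂u
  dsimp only [Cofork.π_ofπ] at hφ hσ
  have huφ : u ≫ φ = q₂ := by
    rw [← cancel_epi (biprod.desc j i₂)]
    ext <;> simp [reassoc_of% hju, hφ, w₂, reassoc_of% hi₂u]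
  refine ⟨φ, ⟨hφ, ⟨σ, ?_, ?_⟩⟩, fun φ' hφ' => by rw [← cancel_epi q₁, hφ, hφ'.1]⟩
  · rw [← cancel_epi q₁, reassoc_of% hφ, hσ, hju, Category.comp_id]
  · rw [← cancel_epi q₂, reassoc_of% hσ, huφ, Category.comp_id]

end CategoryTheory

namespace HNTheory

variable {C : Type*} [Category C] [Preadditive C] {D : Type*} [Category D] [Abelian D]
  {F : C ⥤ D} [F.Additive] [F.Faithful] {V : Type*} [AddCommGroup V] [LinearOrder V]
  (h : HNTheory C D F V)

lemma exists_strictSub_comp_eq_zero_iff {A : D} {X : C} (s : A ⟶ F.obj X) :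
    ∃ J : Subobject X, h.StrictSub J ∧
      ∀ {Y : C} (k : X ⟶ Y), J.arrow ≫ k = 0 ↔ s ≫ F.map k = 0 := by
  obtain ⟨⟨J, hJ⟩, hJs⟩ := (h.strict_sub_bij X).2 (imageSubobject s)
  refine ⟨J, hJ, fun k => ?_⟩
  dsimp only at hJs
  rw [← F.map_injective.eq_iff, F.map_comp, F.map_zero,
    ← imageSubobject_arrow_comp_eq_zero_iff, hJs, imageSubobject_arrow_comp_eq_zero_iff]

lemma exists_sse_comp_mono {W Y : C} (θ : W ⟶ Y) :
    ∃ (N : Subobject W) (Z : C) (g : W ⟶ Z) (ρ : Z ⟶ Y), h.SSE N.arrow g ∧ Mono ρ ∧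
      g ≫ ρ = θ ∧
        ∀ {Y' : C} (k : W ⟶ Y'), N.arrow ≫ k = 0 ↔ kernel.ι (F.map θ) ≫ F.map k = 0 := by
  obtain ⟨N, ⟨Z, g, hNg⟩, hN⟩ := h.exists_strictSub_comp_eq_zero_iff (kernel.ι (F.map θ))
  obtain ⟨ck⟩ := h.sse_isCokernel _ _ hNg
  obtain ⟨ρ, hρ⟩ := CokernelCofork.IsColimit.desc' ck θ ((hN θ).2 (kernel.condition _))
  dsimp only [Cofork.π_ofπ] at hρ
  have : Epi (F.map g) := (h.F_exact _ _ hNg).epi_g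
  have : Mono (F.map ρ) := by
    refine Abelian.mono_of_kernel_ι_comp_eq_zero (F.map g) (F.map ρ) ?_
    rw [← F.map_comp, hρ]
    exact (hN g).1 (h.sse_comp_zero _ _ hNg)
  exact ⟨N, Z, g, ρ, hNg, F.mono_of_mono_map this, hρ, hN⟩

lemma map_comp_eq_zero_of_isGLB {X : C} {S T U I : Subobject X} (hI : IsGLB {S, T} I)
    (hIS : I ≤ S) (hTU : T ≤ U) (hSU : S ≤ U) {Q₁ : C} {q₁ : (S : C) ⟶ Q₁}
    (hq₁ : h.SSE (Subobject.ofLE I S hIS) q₁) {Q₂ : C} {q₂ : (U : C) ⟶ Q₂}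
    (hq₂ : h.SSE (Subobject.ofLE T U hTU) q₂) {A : D} (s : A ⟶ F.obj S)
    (hs : s ≫ F.map (Subobject.ofLE S U hSU ≫ q₂) = 0) : s ≫ F.map q₁ = 0 := by
  obtain ⟨J, -, hJ⟩ := h.exists_strictSub_comp_eq_zero_iff s
  obtain ⟨lk₂⟩ := h.sse_isKernel _ _ hq₂
  rw [← hJ] at hs ⊢
  exact Subobject.comp_eq_zero_of_isGLB hI hIS hTU hSU (h.sse_comp_zero _ _ hq₁) lk₂ _ hs

end HNTheory

/-- (2.10) If the inclusions `S ∩ T ⊆ S` and `T ⊆ S + T` are strict, then the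
canonical map `S/(S ∩ T) → (S + T)/T` induced by `S ⊆ S + T` is an
isomorphism.  Here quotients are presented by the corresponding short strict
exact sequences. -/
theorem stmt5 (h : HNTheory C D F V) {X : C} (S T U I : Subobject X)
    (hU : IsLUB {S, T} U) (hI : IsGLB {S, T} I)
    (hIS : I ≤ S) (hTU : T ≤ U) (hSU : S ≤ U)
    (Q₁ : C) (q₁ : ((S : Subobject X) : C) ⟶ Q₁)
    (hq₁ : h.SSE (Subobject.ofLE I S hIS) q₁)
    (Q₂ : C) (q₂ : ((U : Subobject X) : C) ⟶ Q₂)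
    (hq₂ : h.SSE (Subobject.ofLE T U hTU) q₂) :
    ∃! φ : Q₁ ⟶ Q₂, q₁ ≫ φ = Subobject.ofLE S U hSU ≫ q₂ ∧ IsIso φ := by
  set θ := biprod.desc (Subobject.ofLE S U hSU) (Subobject.ofLE T U hTU)
  obtain ⟨N, Z, g, ρ, hNg, hρ, hgρ, hN⟩ := h.exists_sse_comp_mono θ
  have : IsIso ρ := Subobject.isIso_of_isLUB hU ρ (biprod.inl ≫ g) (biprod.inr ≫ g)
    (by simp [reassoc_of% hgρ, θ]) (by simp [reassoc_of% hgρ, θ])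
  have : Epi g := h.sse_epi _ _ hNg
  have : Epi θ := hgρ ▸ epi_comp g ρ
  have hθq₂ : θ ≫ q₂ = biprod.fst ≫ Subobject.ofLE S U hSU ≫ q₂ := by
    ext <;> simp [θ, h.sse_comp_zero _ _ hq₂]
  have hNq₁ : N.arrow ≫ biprod.fst ≫ q₁ = 0 := by
    rw [hN, F.map_comp, ← Category.assoc]
    refine h.map_comp_eq_zero_of_isGLB hI hIS hTU hSU hq₁ hq₂ _ ?_
    rw [Category.assoc, ← F.map_comp, ← hθq₂, F.map_comp, kernel.condition_assoc, zero_comp]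
  obtain ⟨ck⟩ := h.sse_isCokernel _ _ hNg
  obtain ⟨u, hu⟩ := CokernelCofork.IsColimit.desc' ck _ hNq₁
  dsimp only [Cofork.π_ofπ] at hu
  obtain ⟨ck₁⟩ := h.sse_isCokernel _ _ hq₁
  obtain ⟨ck₂⟩ := h.sse_isCokernel _ _ hq₂
  refine exists_unique_isIso_of_biprod_desc_comp_eq ck₁ ck₂ ?_ (inv ρ ≫ u) ?_
  · rw [← Category.assoc, Subobject.ofLE_comp_ofLE,
      ← Subobject.ofLE_comp_ofLE I T U (hI.1 (by simp)) hTU, Category.assoc,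
      h.sse_comp_zero _ _ hq₂, comp_zero]
  · change θ ≫ _ = _
    rw [← hgρ, Category.assoc, IsIso.hom_inv_id_assoc, hu]
end

section
/- Let X be an object of C and X' a nonzero subobject whose slope is maximal among slopes of nonzero subobjects of X. Then X' is a strict subobject of X and is semistable. In particular, every object of rank 1 is semistable. -/
open CategoryTheory Limits

universe v u v' u'

variable (C : Type u) [Category.{v} C] [Preadditive C] [HasZeroObject C]
  [HasBinaryBiproducts C]
variable (D : Type u') [Category.{v'} D] [Abelian D]
variable (F : C ⥤ D) [F.Additive] [F.Faithful]
variable (V : Type*) [AddCommGroup V] [LinearOrder V] [IsOrderedAddMonoid V]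

/-! Every subobject `S ⊆ X` lies in a strict subobject `T`, its saturation, with `F(S) ≅ F(T)`;
hence `rk S = rk T` and `deg S ≤ deg T`, with equality only if `S = T`. If `S` has maximal slope,
`μ(T) ≤ μ(S)` forces this equality, so `S` is strict, and `S` is semistable because its
subobjects are subobjects of `X`. If `rk X = 1`, a nonzero subobject `S` has rank one, so the
cokernel of its saturation has rank zero and vanishes, giving `deg S ≤ deg T = deg X`. -/

theorem CategoryTheory.Functor.isZero_of_isZero_obj {A B : Type*} [Category A] [Category B]
    [HasZeroMorphisms A] [HasZeroMorphisms B] (G : A ⥤ B) [G.PreservesZeroMorphisms]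
    [G.Faithful] {X : A} (hX : IsZero (G.obj X)) : IsZero X := by
  rw [IsZero.iff_id_eq_zero] at hX ⊢
  rwa [← G.map_eq_zero_iff, G.map_id]

namespace HNTheory

variable {C D F V} (h : HNTheory C D F V)

omit [HasZeroObject C] [HasBinaryBiproducts C]

section

omit [F.Faithful] [IsOrderedAddMonoid V]

lemma rkC_congr {A B : C} (e : A ≅ B) : h.rkC A = h.rkC B :=
  h.rk_iso (F.mapIso e)

lemma muLE_congr_left {A A' : C} (e : A ≅ A') (B : C) : h.muLE A B ↔ h.muLE A' B := by
  rw [muLE, muLE, h.deg_iso e, h.rkC_congr e]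

lemma rkC_eq_add_of_sse {A B Z : C} {f : A ⟶ B} {g : B ⟶ Z} (hfg : h.SSE f g) :
    h.rkC B = h.rkC A + h.rkC Z :=
  h.rk_additive _ (h.F_exact f g hfg)

lemma rkC_eq_of_isIso_map {A B : C} (f : A ⟶ B) [IsIso (F.map f)] : h.rkC A = h.rkC B :=
  h.rk_iso (asIso (F.map f))

lemma isIso_of_sse_of_isZero {A B Z : C} {f : A ⟶ B} {g : B ⟶ Z} (hfg : h.SSE f g)
    (hZ : IsZero Z) : IsIso f :=
  KernelFork.IsLimit.isIso_ι _ (h.sse_isKernel f g hfg).some (hZ.eq_of_tgt g 0)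

variable {h} in
lemma MaxSlopeSub.semistable {X : C} {S : Subobject X} (hS : h.MaxSlopeSub S) :
    h.Semistable (S : C) := by
  refine ⟨hS.1, fun T hT _ => ?_⟩
  let e := Subobject.underlyingIso (T.arrow ≫ S.arrow)
  exact (h.muLE_congr_left e _).1 (hS.2 _ fun hz => hT (hz.of_iso e.symm))

end

section

omit [IsOrderedAddMonoid V]

lemma rkC_eq_zero_iff (A : C) : h.rkC A = 0 ↔ IsZero A :=
  (h.rk_eq_zero_iff _).trans ⟨F.isZero_of_isZero_obj, F.map_isZero⟩

include h in
/-- Although `F` need not preserve monomorphisms, it preserves subobject arrows: the kernel of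
`F(S ⟶ X)` is the image of a strict subobject of `S` killed by `S ⟶ X`, which must be zero. -/
lemma mono_map_arrow {X : C} (S : Subobject X) : Mono (F.map S.arrow) := by
  obtain ⟨⟨T, _⟩, hT⟩ := (h.strict_sub_bij (S : C)).2 (kernelSubobject (F.map S.arrow))
  change imageSubobject (F.map T.arrow) = _ at hT
  have hTS : T.arrow ≫ S.arrow = 0 := F.zero_of_map_zero _ <| by
    rw [F.map_comp, ← imageSubobject_arrow_comp (F.map T.arrow), Category.assoc,
      ← Subobject.ofLE_arrow hT.le, Category.assoc, kernelSubobject_arrow_comp, comp_zero,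
      comp_zero]
  rw [zero_of_comp_mono S.arrow hTS, F.map_zero, imageSubobject_zero] at hT
  have hker : (kernelSubobject (F.map S.arrow)).arrow = 0 := by rw [← hT, Subobject.bot_arrow]
  apply Abelian.mono_of_kernel_ι_eq_zero
  rw [← kernelSubobject_arrow', hker, comp_zero]

lemma exists_strictSub_le_isIso_map {X : C} (S : Subobject X) :
    ∃ (T : Subobject X) (hle : S ≤ T),
      h.StrictSub T ∧ IsIso (F.map (Subobject.ofLE S T hle)) := by
  obtain ⟨⟨T, Z, g, hsse⟩, hT⟩ := (h.strict_sub_bij X).2 (imageSubobject (F.map S.arrow))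
  change imageSubobject (F.map T.arrow) = _ at hT
  have := h.mono_map_arrow S
  have := h.mono_map_arrow T
  rw [imageSubobject_mono, imageSubobject_mono] at hT
  let e := Subobject.isoOfMkEqMk _ _ hT.symm
  have he : e.hom ≫ F.map T.arrow = F.map S.arrow := Subobject.ofMkLEMk_comp _
  have hSg : S.arrow ≫ g = 0 := F.zero_of_map_zero _ <| by
    rw [F.map_comp, ← he, Category.assoc, ← F.map_comp, h.sse_comp_zero _ _ hsse, F.map_zero,
      comp_zero]
  obtain ⟨l, hl⟩ := KernelFork.IsLimit.lift' (h.sse_isKernel _ _ hsse).some S.arrow hSg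
  have hle : S ≤ T := Subobject.le_of_comm l hl
  refine ⟨T, hle, ⟨Z, g, hsse⟩, ?_⟩
  rw [show F.map (Subobject.ofLE S T hle) = e.hom by
    rw [← cancel_mono (F.map T.arrow), he, ← F.map_comp, Subobject.ofLE_arrow]]
  infer_instance

lemma rkC_le {X : C} (T : Subobject X) : h.rkC (T : C) ≤ h.rkC X := by
  obtain ⟨T', hle, ⟨Z, g, hsse⟩, _⟩ := h.exists_strictSub_le_isIso_map T
  rw [h.rkC_eq_add_of_sse hsse, h.rkC_eq_of_isIso_map (Subobject.ofLE T T' hle)]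
  exact Nat.le_add_right _ _

end

lemma muLE_of_rkC_eq {X : C} (T : Subobject X) (hT : h.rkC (T : C) = h.rkC X) :
    h.muLE (T : C) X := by
  obtain ⟨T', hle, ⟨Z, g, hsse⟩, _⟩ := h.exists_strictSub_le_isIso_map T
  have hrk := h.rkC_eq_add_of_sse hsse
  rw [← h.rkC_eq_of_isIso_map (Subobject.ofLE T T' hle), hT] at hrk
  have := h.isIso_of_sse_of_isZero hsse ((h.rkC_eq_zero_iff Z).1 (by omega))
  have hdeg : h.deg (T : C) ≤ h.deg X :=
    (h.deg_le_of_FIso _ ‹_›).trans_eq (h.deg_iso (asIso T'.arrow))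
  rw [muLE, hT]
  exact nsmul_le_nsmul_right hdeg _

lemma eq_of_isIso_map_ofLE {X : C} {S T : Subobject X} (hle : S ≤ T)
    [IsIso (F.map (Subobject.ofLE S T hle))] (hS : ¬ IsZero (S : C))
    (hTS : h.muLE (T : C) (S : C)) : S = T := by
  have hrk := h.rkC_eq_of_isIso_map (Subobject.ofLE S T hle)
  rw [muLE, hrk] at hTS
  have hdeg : h.deg (S : C) = h.deg (T : C) :=
    le_antisymm (h.deg_le_of_FIso _ ‹_›)
      (le_of_nsmul_le_nsmul_right (hrk ▸ (h.rkC_eq_zero_iff _).not.2 hS) hTS)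
  have := (h.deg_eq_iff_of_FIso _ ‹_›).1 hdeg
  exact Subobject.eq_of_comm (asIso (Subobject.ofLE S T hle)) (Subobject.ofLE_arrow hle)

variable {h} in
lemma MaxSlopeSub.strictSub {X : C} {S : Subobject X} (hS : h.MaxSlopeSub S) :
    h.StrictSub S := by
  obtain ⟨T, hle, hT, _⟩ := h.exists_strictSub_le_isIso_map S
  have hTne : ¬ IsZero (T : C) := by
    rw [← h.rkC_eq_zero_iff, ← h.rkC_eq_of_isIso_map (Subobject.ofLE S T hle), h.rkC_eq_zero_iff]
    exact hS.1
  rwa [h.eq_of_isIso_map_ofLE hle hS.1 (hS.2 T hTne)]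

lemma semistable_of_rkC_eq_one {X : C} (hX : h.rkC X = 1) : h.Semistable X := by
  refine ⟨fun hz => by simp [(h.rkC_eq_zero_iff X).2 hz] at hX, fun T hT _ => ?_⟩
  refine h.muLE_of_rkC_eq T ?_
  have := h.rkC_le T
  have := (h.rkC_eq_zero_iff (T : C)).not.2 hT
  omega

end HNTheory

/-- (4.2), (4.7) A nonzero subobject of maximal slope is a strict subobject
and is semistable; in particular, every object of rank one is semistable. -/
theorem stmt10 (h : HNTheory C D F V) :
    (∀ (X : C) (S : Subobject X), ¬ IsZero ((S : C)) →
      (∀ T : Subobject X, ¬ IsZero ((T : C)) → h.muLE (T : C) (S : C)) →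
      h.StrictSub S ∧ h.Semistable (S : C)) ∧
    (∀ X : C, h.rkC X = 1 → h.Semistable X) :=
  ⟨fun _ _ hS hmax => ⟨HNTheory.MaxSlopeSub.strictSub ⟨hS, hmax⟩,
    HNTheory.MaxSlopeSub.semistable ⟨hS, hmax⟩⟩,
   fun _ => h.semistable_of_rkC_eq_one⟩
end
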